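/- arXiv:1110.5346 — 2 statements merged into one kernel-verified Lean document; each statement's English description precedes it below -/
import Mathlib

section
/- Consider the trace regression model Yᵢ = tr(XᵢᵀA₀) + ξᵢ and the nuclear-norm penalized estimator Â^λ. Then for every m₁×m₂ matrix U with nuclear norm ‖U‖₁ = 1, |⟨Â^λ − A₀, U⟩_{L₂(Π)}| ≤ ‖M₁ + M₂‖∞ + λ/2; consequently, on the event {λ ≥ 3‖M₁ + M₂‖∞}, |⟨Â^λ − A₀, U⟩_{L₂(Π)}| ≤ (5/6)λ. -/
/-!
Since `Â` minimizes the objective `F`, `F (Â + t • U) - F Â ≥ 0` for every real `t`. The design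
average splits as `(1/n) Σᵢ Yᵢ Xᵢ = M₁ + M₂ + (1/n) Σᵢ E[⟨A₀, Xᵢ⟩ Xᵢ]`, and the last term pairs with
`U` to `⟨A₀, U⟩_{L₂(Π)}`; with `‖Â + t U‖₁ ≤ ‖Â‖₁ + |t|` this gives
`t² ‖U‖²_{L₂(Π)} + 2 t (⟨Â - A₀, U⟩_{L₂(Π)} - ⟨M₁ + M₂, U⟩) + λ |t| ≥ 0` for all `t`.
Letting `t → 0±` bounds the linear coefficient by `λ / 2`, and trace duality
`|⟨M, U⟩| ≤ ‖M‖∞ ‖U‖₁` finishes.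
-/

open MeasureTheory ProbabilityTheory Matrix Real

noncomputable section

namespace MC

instance matMeasurableSpace {m n : Type*} : MeasurableSpace (Matrix m n ℝ) :=
  inferInstanceAs (MeasurableSpace (m → n → ℝ))

/-- Trace inner product `⟨A,B⟩ = tr(Aᵀ B)`. -/
def mip {m₁ m₂ : ℕ} (A B : Matrix (Fin m₁) (Fin m₂) ℝ) : ℝ := (Aᵀ * B).trace

/-- Frobenius norm `‖A‖₂`. -/
def frob {m₁ m₂ : ℕ} (A : Matrix (Fin m₁) (Fin m₂) ℝ) : ℝ :=
  Real.sqrt (∑ i, ∑ j, (A i j) ^ 2)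

/-- Euclidean norm of a vector. -/
def evnorm {m : ℕ} (v : Fin m → ℝ) : ℝ := Real.sqrt (∑ i, (v i) ^ 2)

/-- Spectral norm `‖A‖_∞` (largest singular value), as the `ℓ₂ → ℓ₂` operator norm. -/
def spec {m₁ m₂ : ℕ} (A : Matrix (Fin m₁) (Fin m₂) ℝ) : ℝ :=
  sSup {r | ∃ x : Fin m₂ → ℝ, evnorm x ≤ 1 ∧ r = evnorm (A.mulVec x)}

/-- Nuclear norm `‖A‖₁` (sum of singular values), via trace duality with the spectral norm. -/
def nuc {m₁ m₂ : ℕ} (A : Matrix (Fin m₁) (Fin m₂) ℝ) : ℝ :=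
  sSup {r | ∃ B : Matrix (Fin m₁) (Fin m₂) ℝ, spec B ≤ 1 ∧ r = mip A B}

/-- Entrywise expectation of a random matrix. -/
def mE {Ω : Type*} [MeasurableSpace Ω] {k l : ℕ} (μ : Measure Ω)
    (Z : Ω → Matrix (Fin k) (Fin l) ℝ) : Matrix (Fin k) (Fin l) ℝ :=
  fun i j => ∫ ω, Z ω i j ∂μ

/-- `⟨A,B⟩_{L₂(Π)} = (1/n) Σᵢ E[⟨A,Xᵢ⟩⟨B,Xᵢ⟩]`. -/
def ipL2 {Ω : Type*} [MeasurableSpace Ω] {m₁ m₂ n : ℕ} (μ : Measure Ω)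
    (X : Fin n → Ω → Matrix (Fin m₁) (Fin m₂) ℝ) (A B : Matrix (Fin m₁) (Fin m₂) ℝ) : ℝ :=
  (1 / n) * ∑ i, ∫ ω, mip A (X i ω) * mip B (X i ω) ∂μ

/-- `‖A‖²_{L₂(Π)} = (1/n) Σᵢ E[⟨A,Xᵢ⟩²]`. -/
def nl2sq {Ω : Type*} [MeasurableSpace Ω] {m₁ m₂ n : ℕ} (μ : Measure Ω)
    (X : Fin n → Ω → Matrix (Fin m₁) (Fin m₂) ℝ) (A : Matrix (Fin m₁) (Fin m₂) ℝ) : ℝ :=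
  ipL2 μ X A A

/-- `κ₁(Π) = inf{‖B‖_{L₂(Π)} : ‖B‖₂ = 1, rank(B) ≤ 1}`. -/
def kappa1 {Ω : Type*} [MeasurableSpace Ω] {m₁ m₂ n : ℕ} (μ : Measure Ω)
    (X : Fin n → Ω → Matrix (Fin m₁) (Fin m₂) ℝ) : ℝ :=
  sInf {r | ∃ B : Matrix (Fin m₁) (Fin m₂) ℝ,
    frob B = 1 ∧ B.rank ≤ 1 ∧ r = Real.sqrt (nl2sq μ X B)}

/-- The coherence `ρ(Π) = sup{|⟨A,B⟩_{L₂(Π)}| / (‖A‖₁‖B‖₁) : A,B ≠ 0, ⟨A,B⟩ = 0}`. -/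
def rho {Ω : Type*} [MeasurableSpace Ω] {m₁ m₂ n : ℕ} (μ : Measure Ω)
    (X : Fin n → Ω → Matrix (Fin m₁) (Fin m₂) ℝ) : ℝ :=
  sSup {r | ∃ A B : Matrix (Fin m₁) (Fin m₂) ℝ, A ≠ 0 ∧ B ≠ 0 ∧ mip A B = 0 ∧
    r = |ipL2 μ X A B| / (nuc A * nuc B)}

/-- The observations `Yᵢ = tr(Xᵢᵀ A₀) + ξᵢ` of the trace regression model. -/
def Yobs {Ω : Type*} {m₁ m₂ n : ℕ} (X : Fin n → Ω → Matrix (Fin m₁) (Fin m₂) ℝ)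
    (ξ : Fin n → Ω → ℝ) (A₀ : Matrix (Fin m₁) (Fin m₂) ℝ) (i : Fin n) (ω : Ω) : ℝ :=
  mip A₀ (X i ω) + ξ i ω

/-- The objective function `‖A‖²_{L₂(Π)} - ⟨(2/n) Σᵢ Yᵢ Xᵢ, A⟩ + λ ‖A‖₁` of the
nuclear-norm penalized estimator, at a realization `ω`. -/
def obj {Ω : Type*} [MeasurableSpace Ω] {m₁ m₂ n : ℕ} (μ : Measure Ω)
    (X : Fin n → Ω → Matrix (Fin m₁) (Fin m₂) ℝ) (ξ : Fin n → Ω → ℝ)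
    (A₀ : Matrix (Fin m₁) (Fin m₂) ℝ) (lam : ℝ) (ω : Ω)
    (A : Matrix (Fin m₁) (Fin m₂) ℝ) : ℝ :=
  nl2sq μ X A - mip ((2 / (n : ℝ)) • ∑ i, Yobs X ξ A₀ i ω • X i ω) A + lam * nuc A

/-- The stochastic error matrix `M₁ = (1/n) Σᵢ ξᵢ Xᵢ`. -/
def M1 {Ω : Type*} {m₁ m₂ n : ℕ} (X : Fin n → Ω → Matrix (Fin m₁) (Fin m₂) ℝ)
    (ξ : Fin n → Ω → ℝ) (ω : Ω) : Matrix (Fin m₁) (Fin m₂) ℝ :=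
  (1 / (n : ℝ)) • ∑ i, ξ i ω • X i ω

/-- The stochastic error matrix `M₂ = (1/n) Σᵢ (⟨A₀,Xᵢ⟩Xᵢ - E[⟨A₀,Xᵢ⟩Xᵢ])`. -/
def M2 {Ω : Type*} [MeasurableSpace Ω] {m₁ m₂ n : ℕ} (μ : Measure Ω)
    (X : Fin n → Ω → Matrix (Fin m₁) (Fin m₂) ℝ) (A₀ : Matrix (Fin m₁) (Fin m₂) ℝ)
    (ω : Ω) : Matrix (Fin m₁) (Fin m₂) ℝ :=
  (1 / (n : ℝ)) • ∑ i, (mip A₀ (X i ω) • X i ω - mE μ (fun ω' => mip A₀ (X i ω') • X i ω'))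

section TraceInner

variable {m₁ m₂ : ℕ}

lemma mip_eq_sum (A B : Matrix (Fin m₁) (Fin m₂) ℝ) : mip A B = ∑ i, ∑ j, A i j * B i j := by
  rw [mip, Matrix.trace, Finset.sum_comm]
  simp [Matrix.mul_apply]

lemma mip_comm (A B : Matrix (Fin m₁) (Fin m₂) ℝ) : mip A B = mip B A := by
  simp only [mip_eq_sum, mul_comm]

lemma mip_add_left (A B C : Matrix (Fin m₁) (Fin m₂) ℝ) :
    mip (A + B) C = mip A C + mip B C := by
  simp only [mip_eq_sum, Matrix.add_apply, add_mul, Finset.sum_add_distrib]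

lemma mip_smul_left (t : ℝ) (A B : Matrix (Fin m₁) (Fin m₂) ℝ) :
    mip (t • A) B = t * mip A B := by
  simp only [mip_eq_sum, Matrix.smul_apply, smul_eq_mul, Finset.mul_sum, mul_assoc]

lemma mip_sum_left {ι : Type*} (s : Finset ι) (A : ι → Matrix (Fin m₁) (Fin m₂) ℝ)
    (B : Matrix (Fin m₁) (Fin m₂) ℝ) : mip (∑ i ∈ s, A i) B = ∑ i ∈ s, mip (A i) B :=
  map_sum (AddMonoidHom.mk' (mip · B) fun A C => mip_add_left A C B) A s

lemma mip_add_right (A B C : Matrix (Fin m₁) (Fin m₂) ℝ) :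
    mip A (B + C) = mip A B + mip A C := by
  rw [mip_comm, mip_add_left, mip_comm B, mip_comm C]

lemma mip_smul_right (t : ℝ) (A B : Matrix (Fin m₁) (Fin m₂) ℝ) :
    mip A (t • B) = t * mip A B := by
  rw [mip_comm, mip_smul_left, mip_comm]

lemma mip_single_one_left (i : Fin m₁) (j : Fin m₂) (B : Matrix (Fin m₁) (Fin m₂) ℝ) :
    mip (Matrix.single i j 1) B = B i j := by
  simp [mip_eq_sum, Matrix.single_apply, ite_and]

end TraceInner

section Norms

variable {m m₁ m₂ : ℕ}

lemma evnorm_eq_norm (v : Fin m → ℝ) : evnorm v = ‖WithLp.toLp 2 v‖ := by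
  simp [evnorm, EuclideanSpace.norm_eq]

def toL2CLM : Matrix (Fin m₁) (Fin m₂) ℝ ≃ₗ[ℝ]
    (EuclideanSpace ℝ (Fin m₂) →L[ℝ] EuclideanSpace ℝ (Fin m₁)) :=
  Matrix.toEuclideanLin.trans LinearMap.toContinuousLinearMap

lemma toL2CLM_toLp (A : Matrix (Fin m₁) (Fin m₂) ℝ) (x : Fin m₂ → ℝ) :
    toL2CLM A (WithLp.toLp 2 x) = WithLp.toLp 2 (A *ᵥ x) := rfl

lemma spec_eq_norm_toL2CLM (A : Matrix (Fin m₁) (Fin m₂) ℝ) : spec A = ‖toL2CLM A‖ := by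
  rw [← ContinuousLinearMap.sSup_unitClosedBall_eq_norm, spec]
  congr 1
  ext r
  simp only [Set.mem_ofPred_eq, Set.mem_image, Metric.mem_closedBall, dist_zero_right]
  constructor
  · rintro ⟨x, hx, rfl⟩
    exact ⟨WithLp.toLp 2 x, by rwa [← evnorm_eq_norm], by rw [evnorm_eq_norm, toL2CLM_toLp]⟩
  · rintro ⟨x, hx, rfl⟩
    exact ⟨x.ofLp, by rwa [evnorm_eq_norm], by rw [evnorm_eq_norm, ← toL2CLM_toLp]⟩

lemma spec_nonneg (A : Matrix (Fin m₁) (Fin m₂) ℝ) : 0 ≤ spec A :=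
  spec_eq_norm_toL2CLM A ▸ norm_nonneg _

lemma spec_smul (c : ℝ) (A : Matrix (Fin m₁) (Fin m₂) ℝ) : spec (c • A) = |c| * spec A := by
  rw [spec_eq_norm_toL2CLM, spec_eq_norm_toL2CLM, map_smul, norm_smul, Real.norm_eq_abs]

lemma abs_apply_le_spec (A : Matrix (Fin m₁) (Fin m₂) ℝ) (i : Fin m₁) (j : Fin m₂) :
    |A i j| ≤ spec A := by
  set e : EuclideanSpace ℝ (Fin m₂) := WithLp.toLp 2 (Pi.single j 1) with he
  calc |A i j| = ‖toL2CLM A e i‖ := by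
        rw [he, toL2CLM_toLp, Matrix.mulVec_single_one, Real.norm_eq_abs]; rfl
    _ ≤ ‖toL2CLM A e‖ := PiLp.norm_apply_le _ _
    _ ≤ ‖toL2CLM A‖ * ‖e‖ := (toL2CLM A).le_opNorm _
    _ = spec A := by simp [e, spec_eq_norm_toL2CLM]

end Norms

section NuclearNorm

variable {m₁ m₂ : ℕ}

lemma nuc_bddAbove (A : Matrix (Fin m₁) (Fin m₂) ℝ) :
    BddAbove {r | ∃ B : Matrix (Fin m₁) (Fin m₂) ℝ, spec B ≤ 1 ∧ r = mip A B} := by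
  refine ⟨∑ i, ∑ j, |A i j|, ?_⟩
  rintro r ⟨B, hB, rfl⟩
  rw [mip_eq_sum]
  gcongr with i _ j _
  calc A i j * B i j ≤ |A i j| * |B i j| := by rw [← abs_mul]; exact le_abs_self _
    _ ≤ |A i j| := mul_le_of_le_one_right (abs_nonneg _) ((abs_apply_le_spec B i j).trans hB)

lemma nuc_nonempty (A : Matrix (Fin m₁) (Fin m₂) ℝ) :
    {r | ∃ B : Matrix (Fin m₁) (Fin m₂) ℝ, spec B ≤ 1 ∧ r = mip A B}.Nonempty :=
  ⟨mip A 0, 0, by simp [spec_eq_norm_toL2CLM], rfl⟩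

lemma mip_le_nuc {A B : Matrix (Fin m₁) (Fin m₂) ℝ} (hB : spec B ≤ 1) : mip A B ≤ nuc A :=
  le_csSup (nuc_bddAbove A) ⟨B, hB, rfl⟩

lemma abs_mip_le_nuc {A B : Matrix (Fin m₁) (Fin m₂) ℝ} (hB : spec B ≤ 1) :
    |mip A B| ≤ nuc A := by
  have hneg : mip A ((-1 : ℝ) • B) ≤ nuc A :=
    mip_le_nuc (by rwa [spec_smul, abs_neg, abs_one, one_mul])
  rw [mip_smul_right] at hneg
  exact abs_le.2 ⟨by linarith, mip_le_nuc hB⟩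

lemma abs_mip_le_nuc_mul_spec (A B : Matrix (Fin m₁) (Fin m₂) ℝ) :
    |mip A B| ≤ nuc A * spec B := by
  rcases (spec_nonneg B).eq_or_lt with h | h
  · have hB : B = 0 := by
      ext i j
      simpa [← h] using abs_apply_le_spec B i j
    rw [← h, mul_zero, hB]
    simp [mip_eq_sum]
  · have hscaled := abs_mip_le_nuc (A := A) (B := (spec B)⁻¹ • B)
      (by rw [spec_smul, abs_inv, abs_of_pos h, inv_mul_cancel₀ h.ne'])
    rwa [mip_smul_right, abs_mul, abs_inv, abs_of_pos h, inv_mul_le_iff₀ h, mul_comm] at hscaled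

lemma nuc_add_le (A B : Matrix (Fin m₁) (Fin m₂) ℝ) : nuc (A + B) ≤ nuc A + nuc B := by
  refine csSup_le (nuc_nonempty _) ?_
  rintro r ⟨C, hC, rfl⟩
  rw [mip_add_left]
  exact add_le_add (mip_le_nuc hC) (mip_le_nuc hC)

lemma nuc_smul_le (t : ℝ) (A : Matrix (Fin m₁) (Fin m₂) ℝ) : nuc (t • A) ≤ |t| * nuc A := by
  refine csSup_le (nuc_nonempty _) ?_
  rintro r ⟨B, hB, rfl⟩
  rw [mip_smul_left]
  calc t * mip A B ≤ |t| * |mip A B| := by rw [← abs_mul]; exact le_abs_self _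
    _ ≤ |t| * nuc A := by gcongr; exact abs_mip_le_nuc hB

end NuclearNorm

section L2

variable {Ω : Type*} [MeasurableSpace Ω] {m₁ m₂ n : ℕ} (μ : Measure Ω)
  (X : Fin n → Ω → Matrix (Fin m₁) (Fin m₂) ℝ)

lemma ipL2_comm (A B : Matrix (Fin m₁) (Fin m₂) ℝ) : ipL2 μ X A B = ipL2 μ X B A := by
  simp only [ipL2, mul_comm (mip A _)]

lemma ipL2_smul_left (t : ℝ) (A B : Matrix (Fin m₁) (Fin m₂) ℝ) :
    ipL2 μ X (t • A) B = t * ipL2 μ X A B := by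
  simp only [ipL2, mip_smul_left, mul_assoc, integral_const_mul, ← Finset.mul_sum]
  ring

lemma ipL2_smul_right (t : ℝ) (A B : Matrix (Fin m₁) (Fin m₂) ℝ) :
    ipL2 μ X A (t • B) = t * ipL2 μ X A B := by
  rw [ipL2_comm, ipL2_smul_left, ipL2_comm]

variable (hInt : ∀ (i : Fin n) (A B : Matrix (Fin m₁) (Fin m₂) ℝ),
  Integrable (fun ω => mip A (X i ω) * mip B (X i ω)) μ)
include hInt

lemma ipL2_add_left (A B C : Matrix (Fin m₁) (Fin m₂) ℝ) :
    ipL2 μ X (A + B) C = ipL2 μ X A C + ipL2 μ X B C := by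
  simp only [ipL2, mip_add_left, add_mul, integral_add (hInt _ A C) (hInt _ B C),
    Finset.sum_add_distrib]
  ring

lemma ipL2_sub_left (A B C : Matrix (Fin m₁) (Fin m₂) ℝ) :
    ipL2 μ X (A - B) C = ipL2 μ X A C - ipL2 μ X B C := by
  rw [sub_eq_add_neg, ← neg_one_smul ℝ B, ipL2_add_left μ X hInt, ipL2_smul_left]
  ring

lemma ipL2_add_right (A B C : Matrix (Fin m₁) (Fin m₂) ℝ) :
    ipL2 μ X A (B + C) = ipL2 μ X A B + ipL2 μ X A C := by
  rw [ipL2_comm, ipL2_add_left μ X hInt, ipL2_comm μ X B, ipL2_comm μ X C]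

lemma nl2sq_add_smul (A U : Matrix (Fin m₁) (Fin m₂) ℝ) (t : ℝ) :
    nl2sq μ X (A + t • U) = nl2sq μ X A + 2 * t * ipL2 μ X A U + t ^ 2 * nl2sq μ X U := by
  simp only [nl2sq, ipL2_add_left μ X hInt, ipL2_add_right μ X hInt, ipL2_smul_left,
    ipL2_smul_right, ipL2_comm μ X U A]
  ring

end L2

lemma mip_mE {Ω : Type*} [MeasurableSpace Ω] {m₁ m₂ : ℕ} (μ : Measure Ω)
    (Z : Ω → Matrix (Fin m₁) (Fin m₂) ℝ) (hZ : ∀ i j, Integrable (fun ω => Z ω i j) μ)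
    (U : Matrix (Fin m₁) (Fin m₂) ℝ) : mip (mE μ Z) U = ∫ ω, mip (Z ω) U ∂μ := by
  simp_rw [mip_eq_sum]
  rw [integral_finsetSum Finset.univ fun i _ =>
    integrable_finsetSum Finset.univ fun j _ => (hZ i j).mul_const (U i j)]
  refine Finset.sum_congr rfl fun i _ => ?_
  rw [integral_finsetSum Finset.univ fun j _ => (hZ i j).mul_const (U i j)]
  simp only [integral_mul_const, mE]

section Response

variable {Ω : Type*} [MeasurableSpace Ω] {m₁ m₂ n : ℕ} (μ : Measure Ω)
  (X : Fin n → Ω → Matrix (Fin m₁) (Fin m₂) ℝ) (ξ : Fin n → Ω → ℝ)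
  (A₀ : Matrix (Fin m₁) (Fin m₂) ℝ) (ω : Ω)

lemma smul_sum_Yobs_smul_eq :
    (1 / (n : ℝ)) • ∑ i, Yobs X ξ A₀ i ω • X i ω = M1 X ξ ω + M2 μ X A₀ ω
      + (1 / (n : ℝ)) • ∑ i, mE μ (fun ω' => mip A₀ (X i ω') • X i ω') := by
  simp only [M1, M2, Yobs, add_smul, Finset.sum_add_distrib, Finset.sum_sub_distrib, smul_add,
    smul_sub]
  abel

lemma mip_smul_sum_mE_eq_ipL2
    (hInt : ∀ (i : Fin n) (A B : Matrix (Fin m₁) (Fin m₂) ℝ),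
      Integrable (fun ω => mip A (X i ω) * mip B (X i ω)) μ)
    (U : Matrix (Fin m₁) (Fin m₂) ℝ) :
    mip ((1 / (n : ℝ)) • ∑ i, mE μ (fun ω => mip A₀ (X i ω) • X i ω)) U = ipL2 μ X A₀ U := by
  rw [mip_smul_left, mip_sum_left, ipL2]
  congr 1
  refine Finset.sum_congr rfl fun i _ => ?_
  rw [mip_mE μ _ fun j k => by simpa [mip_single_one_left] using hInt i A₀ (Matrix.single j k 1)]
  simp only [mip_smul_left, mip_comm (X i _) U]

end Response

lemma abs_le_half_of_forall_quadratic_nonneg {Q c lam : ℝ}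
    (h : ∀ t : ℝ, 0 ≤ t ^ 2 * Q + 2 * t * c + lam * |t|) : |c| ≤ lam / 2 := by
  have hs : ∀ s > 0, 2 * |c| ≤ s * Q + lam := by
    intro s hs
    have h₁ := h s
    have h₂ := h (-s)
    rw [abs_of_pos hs] at h₁
    rw [abs_neg, abs_of_pos hs] at h₂
    have h₁' : 0 ≤ s * Q + 2 * c + lam := by nlinarith
    have h₂' : 0 ≤ s * Q - 2 * c + lam := by nlinarith
    cases abs_cases c <;> linarith
  refine le_of_forall_pos_le_add fun ε hε => ?_
  have hQ : 0 < |Q| + 1 := by positivity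
  have hsQ : 2 * ε / (|Q| + 1) * Q ≤ 2 * ε := by
    rw [div_mul_eq_mul_div, div_le_iff₀ hQ]
    nlinarith [le_abs_self Q]
  linarith [hs (2 * ε / (|Q| + 1)) (by positivity)]

lemma obj_add_smul_sub_obj {Ω : Type*} [MeasurableSpace Ω] {m₁ m₂ n : ℕ} (μ : Measure Ω)
    (X : Fin n → Ω → Matrix (Fin m₁) (Fin m₂) ℝ) (ξ : Fin n → Ω → ℝ)
    (hInt : ∀ (i : Fin n) (A B : Matrix (Fin m₁) (Fin m₂) ℝ),
      Integrable (fun ω => mip A (X i ω) * mip B (X i ω)) μ)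
    (A₀ : Matrix (Fin m₁) (Fin m₂) ℝ) (lam : ℝ) (ω : Ω) (A U : Matrix (Fin m₁) (Fin m₂) ℝ)
    (t : ℝ) :
    obj μ X ξ A₀ lam ω (A + t • U) - obj μ X ξ A₀ lam ω A
      = t ^ 2 * nl2sq μ X U + 2 * t * (ipL2 μ X (A - A₀) U - mip (M1 X ξ ω + M2 μ X A₀ ω) U)
        + lam * (nuc (A + t • U) - nuc A) := by
  set S := (1 / (n : ℝ)) • ∑ i, Yobs X ξ A₀ i ω • X i ω with hS_def
  have hS : (2 / (n : ℝ)) • ∑ i, Yobs X ξ A₀ i ω • X i ω = (2 : ℝ) • S := by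
    rw [smul_smul]; ring_nf
  have hSU : mip S U = ipL2 μ X A₀ U + mip (M1 X ξ ω + M2 μ X A₀ ω) U := by
    rw [hS_def, smul_sum_Yobs_smul_eq, mip_add_left, mip_smul_sum_mE_eq_ipL2 μ X A₀ hInt,
      add_comm]
  simp only [obj, hS, mip_smul_left, mip_add_right, mip_smul_right, hSU,
    nl2sq_add_smul μ X hInt, ipL2_sub_left μ X hInt]
  ring

theorem dual_norm_bound_general {m₁ m₂ n : ℕ}
    {Ω : Type*} [MeasurableSpace Ω] (μ : Measure Ω)
    (X : Fin n → Ω → Matrix (Fin m₁) (Fin m₂) ℝ) (ξ : Fin n → Ω → ℝ)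
    (hInt : ∀ (i : Fin n) (A B : Matrix (Fin m₁) (Fin m₂) ℝ),
      Integrable (fun ω => mip A (X i ω) * mip B (X i ω)) μ)
    (A₀ : Matrix (Fin m₁) (Fin m₂) ℝ)
    (lam : ℝ) (hlam : 0 < lam)
    (Ahat : Ω → Matrix (Fin m₁) (Fin m₂) ℝ)
    (hmin : ∀ ω (A : Matrix (Fin m₁) (Fin m₂) ℝ),
      obj μ X ξ A₀ lam ω (Ahat ω) ≤ obj μ X ξ A₀ lam ω A)
    (ω : Ω) (U : Matrix (Fin m₁) (Fin m₂) ℝ) (hU : nuc U = 1) :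
    |ipL2 μ X (Ahat ω - A₀) U| ≤ spec (M1 X ξ ω + M2 μ X A₀ ω) + lam / 2 ∧
      (3 * spec (M1 X ξ ω + M2 μ X A₀ ω) ≤ lam →
        |ipL2 μ X (Ahat ω - A₀) U| ≤ (5 / 6) * lam) := by
  set M := M1 X ξ ω + M2 μ X A₀ ω
  set D := ipL2 μ X (Ahat ω - A₀) U
  have hquad : ∀ t : ℝ, 0 ≤ t ^ 2 * nl2sq μ X U + 2 * t * (D - mip M U) + lam * |t| := by
    intro t
    have hopt := sub_nonneg.2 (hmin ω (Ahat ω + t • U))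
    rw [obj_add_smul_sub_obj μ X ξ hInt] at hopt
    have hnuc : nuc (Ahat ω + t • U) - nuc (Ahat ω) ≤ |t| := by
      have := (nuc_add_le (Ahat ω) (t • U)).trans (add_le_add_right (nuc_smul_le t U) _)
      rw [hU, mul_one] at this
      linarith
    nlinarith [mul_le_mul_of_nonneg_left hnuc hlam.le]
  have hDM : |D - mip M U| ≤ lam / 2 := abs_le_half_of_forall_quadratic_nonneg hquad
  have hMU : |mip M U| ≤ spec M := by
    simpa [mip_comm M, hU] using abs_mip_le_nuc_mul_spec U M
  have hD : |D| ≤ spec M + lam / 2 := by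
    linarith [abs_sub_abs_le_abs_sub D (mip M U)]
  exact ⟨hD, fun h3 => by linarith⟩

/-- for every `U` with `‖U‖₁ = 1`,
`|⟨Â^λ - A₀, U⟩_{L₂(Π)}| ≤ ‖M₁ + M₂‖_∞ + λ/2`; consequently, on the event
`λ ≥ 3‖M₁ + M₂‖_∞`, `|⟨Â^λ - A₀, U⟩_{L₂(Π)}| ≤ (5/6) λ`. -/
theorem dual_norm_bound {m₁ m₂ n : ℕ} (hn : 0 < n)
    {Ω : Type*} [MeasurableSpace Ω] (μ : Measure Ω) [IsProbabilityMeasure μ]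
    (X : Fin n → Ω → Matrix (Fin m₁) (Fin m₂) ℝ) (ξ : Fin n → Ω → ℝ)
    (hmeasX : ∀ i, Measurable (X i)) (hmeasξ : ∀ i, Measurable (ξ i))
    (hInt : ∀ (i : Fin n) (A B : Matrix (Fin m₁) (Fin m₂) ℝ),
      Integrable (fun ω => mip A (X i ω) * mip B (X i ω)) μ)
    (hξmean : ∀ i, ∫ ω, ξ i ω ∂μ = 0)
    (A₀ : Matrix (Fin m₁) (Fin m₂) ℝ)
    (lam : ℝ) (hlam : 0 < lam)
    (Ahat : Ω → Matrix (Fin m₁) (Fin m₂) ℝ)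
    (hmin : ∀ ω (A : Matrix (Fin m₁) (Fin m₂) ℝ),
      obj μ X ξ A₀ lam ω (Ahat ω) ≤ obj μ X ξ A₀ lam ω A)
    (ω : Ω) (U : Matrix (Fin m₁) (Fin m₂) ℝ) (hU : nuc U = 1) :
    |ipL2 μ X (Ahat ω - A₀) U| ≤ spec (M1 X ξ ω + M2 μ X A₀ ω) + lam / 2 ∧
      (3 * spec (M1 X ξ ω + M2 μ X A₀ ω) ≤ lam →
        |ipL2 μ X (Ahat ω - A₀) U| ≤ (5 / 6) * lam) :=
  dual_norm_bound_general μ X ξ hInt A₀ lam hlam Ahat hmin ω U hU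

end MC
end
end

section
/- Let X have distribution Π on the matrix completion basis 𝒳 with √(c₁/(m₁m₂)) ≤ κ₁ ≤ κ₁' ≤ √(c₁'/(m₁m₂)), and suppose 2c₁' ≤ (m₁∨m₂)·c₁. Then the centered matrix X̃ = X − E(X) satisfies c₁/(2(m₁∧m₂)) ≤ σ_{X̃}² ≤ 2c₁'/(m₁∧m₂), where σ_{X̃}² = max{‖E(X̃X̃ᵀ)‖∞, ‖E(X̃ᵀX̃)‖∞}. -/
/-!
Because `Π` is carried by the basis, `X = e_J e_Kᵀ` for a random cell `(J, K)` whose law is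
the matrix `π` of cell probabilities. Testing `κ₁` and `κ₁'` on the rank-one matrices
`e_j e_kᵀ` pins every `π_{jk}` between `c₁ / (m₁ m₂)` and `c₁' / (m₁ m₂)`.
Now `E(X̃X̃ᵀ) = diag(π 𝟙) - π πᵀ` is the covariance matrix of `e_J` (and `E(X̃ᵀX̃)` that of
`e_K`). Its spectral norm is at most the largest row sum plus `‖π‖₂² ≤ max π_{jk}`, i.e. at
most `c₁'/m₁ + c₁'/(m₁m₂)`; its diagonal entries are at least `c₁/m₁ - c₁'/(m₁m₂)`, which is
`≥ c₁/(2m₁)` as soon as `2c₁' ≤ m₂c₁`. Using the side of smaller dimension gives the lower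
bound.
-/

open MeasureTheory ProbabilityTheory Matrix Real

noncomputable section

namespace MC

/-- The matrix completion basis `𝒳 = {e_j(m₁) e_k(m₂)ᵀ}`. -/
def mcBasis (m₁ m₂ : ℕ) : Set (Matrix (Fin m₁) (Fin m₂) ℝ) :=
  {M | ∃ j k, M = Matrix.single j k (1 : ℝ)}

/-- `⟨A,B⟩_{L₂(Pdist)} = E[⟨A,X⟩⟨B,X⟩]` for `X ~ Pdist`. -/
def ipL2Pi {m₁ m₂ : ℕ} (Pdist : Measure (Matrix (Fin m₁) (Fin m₂) ℝ))
    (A B : Matrix (Fin m₁) (Fin m₂) ℝ) : ℝ :=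
  ∫ M, mip A M * mip B M ∂Pdist

/-- `‖A‖²_{L₂(Pdist)} = E[⟨A,X⟩²]` for `X ~ Pdist`. -/
def nl2sqPi {m₁ m₂ : ℕ} (Pdist : Measure (Matrix (Fin m₁) (Fin m₂) ℝ))
    (A : Matrix (Fin m₁) (Fin m₂) ℝ) : ℝ :=
  ipL2Pi Pdist A A

/-- `κ₁(Pdist) = inf{‖B‖_{L₂(Pdist)} : ‖B‖₂ = 1, rank(B) ≤ 1}`. -/
def kappa1Pi {m₁ m₂ : ℕ} (Pdist : Measure (Matrix (Fin m₁) (Fin m₂) ℝ)) : ℝ :=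
  sInf {r | ∃ B : Matrix (Fin m₁) (Fin m₂) ℝ,
    frob B = 1 ∧ B.rank ≤ 1 ∧ r = Real.sqrt (nl2sqPi Pdist B)}

/-- `κ₁'(Pdist) = sup{‖B‖_{L₂(Pdist)} : ‖B‖₂ = 1, rank(B) ≤ 1}`. -/
def kappa1'Pi {m₁ m₂ : ℕ} (Pdist : Measure (Matrix (Fin m₁) (Fin m₂) ℝ)) : ℝ :=
  sSup {r | ∃ B : Matrix (Fin m₁) (Fin m₂) ℝ,
    frob B = 1 ∧ B.rank ≤ 1 ∧ r = Real.sqrt (nl2sqPi Pdist B)}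

/-- The coherence `ρ(Pdist)`. -/
def rhoPi {m₁ m₂ : ℕ} (Pdist : Measure (Matrix (Fin m₁) (Fin m₂) ℝ)) : ℝ :=
  sSup {r | ∃ A B : Matrix (Fin m₁) (Fin m₂) ℝ, A ≠ 0 ∧ B ≠ 0 ∧ mip A B = 0 ∧
    r = |ipL2Pi Pdist A B| / (nuc A * nuc B)}

/-- Entrywise expectation `E[f(X)]` for `X ~ Pdist`. -/
def mEPi {m₁ m₂ k l : ℕ} (Pdist : Measure (Matrix (Fin m₁) (Fin m₂) ℝ))
    (f : Matrix (Fin m₁) (Fin m₂) ℝ → Matrix (Fin k) (Fin l) ℝ) : Matrix (Fin k) (Fin l) ℝ :=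
  fun i j => ∫ M, f M i j ∂Pdist

open scoped Matrix.Norms.L2Operator

section OperatorNorm

variable {m₁ m₂ : ℕ}

lemma evnorm_eq_norm_toLp {m : ℕ} (v : Fin m → ℝ) : evnorm v = ‖WithLp.toLp 2 v‖ := by
  simp [evnorm, EuclideanSpace.norm_eq]

lemma norm_toEuclideanLin_apply (A : Matrix (Fin m₁) (Fin m₂) ℝ) (x : EuclideanSpace ℝ (Fin m₂)) :
    ‖toEuclideanLin A x‖ = evnorm (A *ᵥ x.ofLp) :=
  (evnorm_eq_norm_toLp _).symm

lemma spec_eq_l2_opNorm (A : Matrix (Fin m₁) (Fin m₂) ℝ) : spec A = ‖A‖ := by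
  rw [l2_opNorm_def, ← ContinuousLinearMap.sSup_unitClosedBall_eq_norm]
  refine congrArg sSup (Set.ext fun r => ⟨?_, ?_⟩)
  · rintro ⟨x, hx, rfl⟩
    refine ⟨WithLp.toLp 2 x, by simpa [evnorm_eq_norm_toLp] using hx, ?_⟩
    exact norm_toEuclideanLin_apply A _
  · rintro ⟨x, hx, rfl⟩
    refine ⟨x.ofLp, by simpa [evnorm_eq_norm_toLp] using hx, ?_⟩
    exact norm_toEuclideanLin_apply A x

lemma evnorm_mulVec_le (A : Matrix (Fin m₁) (Fin m₂) ℝ) (x : Fin m₂ → ℝ) :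
    evnorm (A *ᵥ x) ≤ frob A * evnorm x := by
  rw [evnorm, frob, evnorm, ← Real.sqrt_mul (by positivity), Finset.sum_mul]
  gcongr with i
  simp only [mulVec, dotProduct]
  exact Finset.sum_mul_sq_le_sq_mul_sq _ _ _

lemma l2_opNorm_le_frob (A : Matrix (Fin m₁) (Fin m₂) ℝ) : ‖A‖ ≤ frob A := by
  refine ContinuousLinearMap.opNorm_le_bound _ (Real.sqrt_nonneg _) fun x => ?_
  rw [LinearEquiv.trans_apply, LinearMap.coe_toContinuousLinearMap', norm_toEuclideanLin_apply,
    ← evnorm_eq_norm_toLp x.ofLp]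
  exact evnorm_mulVec_le A x.ofLp

lemma apply_self_le_l2_opNorm {n : Type*} [Fintype n] [DecidableEq n] (A : Matrix n n ℝ) (i : n) :
    A i i ≤ ‖A‖ := by
  have h := A.l2_opNorm_mulVec (WithLp.toLp 2 (Pi.single i 1))
  simp only [mulVec_single, MulOpposite.op_one, one_smul, PiLp.continuousLinearEquiv_symm_apply,
    PiLp.toLp_single, PiLp.norm_single, norm_one, mul_one] at h
  calc A i i ≤ ‖WithLp.toLp 2 (A.col i)‖ :=
        (Real.le_norm_self _).trans (PiLp.norm_apply_le (WithLp.toLp 2 (A.col i)) i)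
    _ ≤ ‖A‖ := h

end OperatorNorm

section RowCovariance

/-- If `q` is the joint law of a random index pair `(I, J)`, this is the covariance matrix of the
one-hot vector `e_I`. -/
def rowCov {m n : Type*} [Fintype n] [DecidableEq m] (q : Matrix m n ℝ) : Matrix m m ℝ :=
  diagonal (fun i => ∑ j, q i j) - q * qᵀ

variable {m n : ℕ} {q : Matrix (Fin m) (Fin n) ℝ}

lemma sum_sum_sq_le {h : ℝ} (hq0 : ∀ i j, 0 ≤ q i j) (hq1 : ∑ i, ∑ j, q i j = 1)
    (hqh : ∀ i j, q i j ≤ h) : ∑ i, ∑ j, q i j ^ 2 ≤ h :=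
  calc ∑ i, ∑ j, q i j ^ 2 ≤ ∑ i, ∑ j, h * q i j := by
        gcongr with i _ j
        rw [sq]
        exact mul_le_mul_of_nonneg_right (hqh i j) (hq0 i j)
    _ = h := by simp only [← Finset.mul_sum, hq1, mul_one]

lemma norm_rowCov_le {h : ℝ} (hh : 0 ≤ h) (hq0 : ∀ i j, 0 ≤ q i j) (hq1 : ∑ i, ∑ j, q i j = 1)
    (hqh : ∀ i j, q i j ≤ h) : ‖rowCov q‖ ≤ n * h + h := by
  have hdiag : ‖(diagonal fun i => ∑ j, q i j : Matrix (Fin m) (Fin m) ℝ)‖ ≤ n * h := by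
    rw [l2_opNorm_diagonal, pi_norm_le_iff_of_nonneg (by positivity)]
    intro i
    rw [Real.norm_of_nonneg (Finset.sum_nonneg fun j _ => hq0 i j)]
    simpa using Finset.sum_le_sum fun j (_ : j ∈ Finset.univ) => hqh i j
  have hgram : ‖q * qᵀ‖ ≤ h :=
    calc ‖q * qᵀ‖ ≤ ‖q‖ * ‖qᵀ‖ := l2_opNorm_mul q qᵀ
      _ = ‖q‖ ^ 2 := by
        rw [← conjTranspose_eq_transpose_of_trivial, l2_opNorm_conjTranspose, sq]
      _ ≤ frob q ^ 2 := by gcongr; exact l2_opNorm_le_frob q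
      _ = ∑ i, ∑ j, q i j ^ 2 := Real.sq_sqrt (by positivity)
      _ ≤ h := sum_sum_sq_le hq0 hq1 hqh
  exact (norm_sub_le _ _).trans (add_le_add hdiag hgram)

lemma rowCov_apply_self_ge {l h : ℝ} (hq0 : ∀ i j, 0 ≤ q i j) (hq1 : ∑ i, ∑ j, q i j = 1)
    (hql : ∀ i j, l ≤ q i j) (hqh : ∀ i j, q i j ≤ h) (i : Fin m) :
    n * l - h ≤ rowCov q i i := by
  have hrow : n * l ≤ ∑ j, q i j := by
    simpa using Finset.sum_le_sum fun j (_ : j ∈ Finset.univ) => hql i j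
  have hsq : ∑ j, q i j ^ 2 ≤ h :=
    (Finset.single_le_sum (f := fun i => ∑ j, q i j ^ 2) (fun i _ => by positivity)
      (Finset.mem_univ i)).trans (sum_sum_sq_le hq0 hq1 hqh)
  simp only [rowCov, Matrix.sub_apply, diagonal_apply_eq, mul_apply, transpose_apply, ← sq]
  linarith

lemma norm_rowCov_le_two_mul_div_min {c' : ℝ} (hm : 0 < m) (hn : 0 < n) (hc' : 0 ≤ c')
    (hq0 : ∀ i j, 0 ≤ q i j) (hq1 : ∑ i, ∑ j, q i j = 1) (hqh : ∀ i j, q i j ≤ c' / (m * n)) :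
    ‖rowCov q‖ ≤ 2 * c' / (min m n : ℕ) := by
  have hmR : (0 : ℝ) < m := by exact_mod_cast hm
  have hnR : (1 : ℝ) ≤ n := by exact_mod_cast hn
  have hmin : (0 : ℝ) < (min m n : ℕ) := by exact_mod_cast lt_min hm hn
  have hmin_le : ((min m n : ℕ) : ℝ) ≤ m := by exact_mod_cast min_le_left m n
  refine (norm_rowCov_le (by positivity) hq0 hq1 hqh).trans ?_
  calc n * (c' / (m * n)) + c' / (m * n) ≤ c' / m + c' / m := by
        gcongr
        · exact le_of_eq (by field_simp)
        · nlinarith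
    _ ≤ c' / (min m n : ℕ) + c' / (min m n : ℕ) := by gcongr
    _ = 2 * c' / (min m n : ℕ) := by ring

lemma div_two_mul_le_norm_rowCov {c c' : ℝ} (hm : 0 < m) (hn : 0 < n) (hcc' : 2 * c' ≤ n * c)
    (hq0 : ∀ i j, 0 ≤ q i j) (hq1 : ∑ i, ∑ j, q i j = 1)
    (hql : ∀ i j, c / (m * n) ≤ q i j) (hqh : ∀ i j, q i j ≤ c' / (m * n)) :
    c / (2 * m) ≤ ‖rowCov q‖ := by
  have hmR : (0 : ℝ) < m := by exact_mod_cast hm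
  have hnR : (0 : ℝ) < n := by exact_mod_cast hn
  calc c / (2 * m) ≤ n * (c / (m * n)) - c' / (m * n) := by
        rw [div_le_iff₀ (by positivity)]
        field_simp
        linarith
    _ ≤ rowCov q ⟨0, hm⟩ ⟨0, hm⟩ := rowCov_apply_self_ge hq0 hq1 hql hqh _
    _ ≤ ‖rowCov q‖ := apply_self_le_l2_opNorm _ _

end RowCovariance

section WeightedCovariance

variable {ι m n : Type*} [Fintype ι] (w : ι → ℝ) (v : ι → Matrix m n ℝ) (μ : Matrix m n ℝ)

lemma sum_smul_sub_mul_transpose_sub [Fintype n] (hw : ∑ i, w i = 1)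
    (hμ : ∑ i, w i • v i = μ) :
    ∑ i, w i • ((v i - μ) * (v i - μ)ᵀ) = ∑ i, w i • (v i * (v i)ᵀ) - μ * μᵀ := by
  have hleft : ∑ i, w i • (v i * μᵀ) = μ * μᵀ := by
    simp only [← Matrix.smul_mul, ← Matrix.sum_mul, hμ]
  have hright : ∑ i, w i • (μ * (v i)ᵀ) = μ * μᵀ := by
    simp only [← Matrix.mul_smul, ← Matrix.mul_sum, ← transpose_smul, ← transpose_sum, hμ]
  have hconst : ∑ i, w i • (μ * μᵀ) = μ * μᵀ := by
    rw [← Finset.sum_smul, hw, one_smul]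
  simp only [Matrix.sub_mul, Matrix.mul_sub, transpose_sub, smul_sub, Finset.sum_sub_distrib,
    hleft, hright, hconst]
  abel

lemma sum_smul_transpose_sub_mul_sub [Fintype m] (hw : ∑ i, w i = 1)
    (hμ : ∑ i, w i • v i = μ) :
    ∑ i, w i • ((v i - μ)ᵀ * (v i - μ)) = ∑ i, w i • ((v i)ᵀ * v i) - μᵀ * μ := by
  have hμT : ∑ i, w i • (v i)ᵀ = μᵀ := by simp only [← transpose_smul, ← transpose_sum, hμ]
  simpa only [transpose_sub, transpose_transpose] using
    sum_smul_sub_mul_transpose_sub w (fun i => (v i)ᵀ) μᵀ hw hμT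

end WeightedCovariance

theorem integral_eq_sum_of_ae_mem_range {α ι E : Type*} [MeasurableSpace α]
    [MeasurableSingletonClass α] [Fintype ι] [NormedAddCommGroup E] [NormedSpace ℝ E]
    [CompleteSpace E] {μ : Measure α} [IsFiniteMeasure μ] {g : ι → α}
    (hg : Function.Injective g) (hμ : ∀ᵐ x ∂μ, x ∈ Set.range g) (f : α → E) :
    ∫ x, f x ∂μ = ∑ i, μ.real {g i} • f (g i) := by
  classical
  have hrange : ((Finset.univ.image g : Finset α) : Set α) = Set.range g := by simp
  calc ∫ x, f x ∂μ = ∫ x in (Finset.univ.image g : Finset α), f x ∂μ := by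
        rw [Measure.restrict_eq_self_of_ae_mem (hrange ▸ hμ)]
    _ = ∑ x ∈ Finset.univ.image g, μ.real {x} • f x := setIntegral_finset _ IntegrableOn.finset
    _ = ∑ i, μ.real {g i} • f (g i) := Finset.sum_image fun i _ j _ h => hg h

instance matMeasurableSingletonClass {m n : Type*} [Countable m] [Countable n] :
    MeasurableSingletonClass (Matrix m n ℝ) :=
  inferInstanceAs (MeasurableSingletonClass (m → n → ℝ))

section SingleOne

lemma single_one_injective {m n : Type*} [DecidableEq m] [DecidableEq n] :
    Function.Injective fun ij : m × n => single ij.1 ij.2 (1 : ℝ) := by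
  rintro ⟨i, j⟩ ⟨i', j'⟩ h
  simpa [single_apply] using congrFun (congrFun h i') j'

lemma rank_single_one_le {m n : Type*} [Fintype n] [DecidableEq m] [DecidableEq n] (i : m)
    (j : n) : (single i j (1 : ℝ)).rank ≤ 1 := by
  rw [single_eq_single_vecMulVec_single]
  exact rank_vecMulVec_le _ _

lemma sum_smul_single_mul_transpose {m n : Type*} [Fintype m] [Fintype n] [DecidableEq m]
    [DecidableEq n] (q : Matrix m n ℝ) :
    ∑ ij : m × n, q ij.1 ij.2 • (single ij.1 ij.2 (1 : ℝ) * (single ij.1 ij.2 (1 : ℝ))ᵀ) =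
      diagonal fun i => ∑ j, q i j := by
  simp only [transpose_single, single_mul_single_same, mul_one, smul_single, smul_eq_mul,
    Fintype.sum_prod_type, ← sum_single_eq_diagonal]
  exact Finset.sum_congr rfl fun i _ => (map_sum (singleAddMonoidHom (α := ℝ) i i) _ _).symm

lemma sum_smul_transpose_single_mul {m n : Type*} [Fintype m] [Fintype n] [DecidableEq m]
    [DecidableEq n] (q : Matrix m n ℝ) :
    ∑ ij : m × n, q ij.1 ij.2 • ((single ij.1 ij.2 (1 : ℝ))ᵀ * single ij.1 ij.2 (1 : ℝ)) =
      diagonal fun j => ∑ i, q i j := by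
  simp only [transpose_single, single_mul_single_same, mul_one, smul_single, smul_eq_mul,
    Fintype.sum_prod_type_right, ← sum_single_eq_diagonal]
  exact Finset.sum_congr rfl fun i _ => (map_sum (singleAddMonoidHom (α := ℝ) i i) _ _).symm

variable {m₁ m₂ : ℕ}

lemma range_single_one :
    Set.range (fun jk : Fin m₁ × Fin m₂ => single jk.1 jk.2 (1 : ℝ)) = mcBasis m₁ m₂ := by
  ext M
  simp [mcBasis, eq_comm]

lemma mip_single_one (A : Matrix (Fin m₁) (Fin m₂) ℝ) (j : Fin m₁) (k : Fin m₂) :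
    mip A (single j k 1) = A j k := by
  simp [mip, trace_mul_single]

lemma frob_single_one (j : Fin m₁) (k : Fin m₂) : frob (single j k (1 : ℝ)) = 1 := by
  simp [frob, single_apply, ite_and]

end SingleOne

def cellProb {m₁ m₂ : ℕ} (Pdist : Measure (Matrix (Fin m₁) (Fin m₂) ℝ)) :
    Matrix (Fin m₁) (Fin m₂) ℝ :=
  Matrix.of fun j k => Pdist.real {single j k 1}

section CellProbabilities

variable {m₁ m₂ : ℕ} {Pdist : Measure (Matrix (Fin m₁) (Fin m₂) ℝ)} [IsProbabilityMeasure Pdist]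

lemma integral_eq_sum_cellProb {E : Type*} [NormedAddCommGroup E] [NormedSpace ℝ E]
    [CompleteSpace E] (hsupp : Pdist (mcBasis m₁ m₂) = 1) (f : Matrix (Fin m₁) (Fin m₂) ℝ → E) :
    ∫ M, f M ∂Pdist =
      ∑ jk : Fin m₁ × Fin m₂, cellProb Pdist jk.1 jk.2 • f (single jk.1 jk.2 1) := by
  refine integral_eq_sum_of_ae_mem_range single_one_injective ?_ f
  have hfin : (mcBasis m₁ m₂).Finite := range_single_one ▸ Set.finite_range _
  rw [range_single_one, ae_mem_iff_measure_eq hfin.measurableSet.nullMeasurableSet, hsupp,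
    measure_univ]

lemma sum_cellProb (hsupp : Pdist (mcBasis m₁ m₂) = 1) :
    ∑ i, ∑ j, cellProb Pdist i j = 1 := by
  simpa [Fintype.sum_prod_type] using (integral_eq_sum_cellProb hsupp fun _ => (1 : ℝ)).symm

lemma mEPi_eq_sum_cellProb (hsupp : Pdist (mcBasis m₁ m₂) = 1) {k l : ℕ}
    (f : Matrix (Fin m₁) (Fin m₂) ℝ → Matrix (Fin k) (Fin l) ℝ) :
    mEPi Pdist f = ∑ ij : Fin m₁ × Fin m₂, cellProb Pdist ij.1 ij.2 • f (single ij.1 ij.2 1) := by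
  ext a b
  simp only [mEPi, integral_eq_sum_cellProb hsupp, Matrix.sum_apply, Matrix.smul_apply, smul_eq_mul]

lemma mEPi_id (hsupp : Pdist (mcBasis m₁ m₂) = 1) : mEPi Pdist (fun M' => M') = cellProb Pdist := by
  rw [mEPi_eq_sum_cellProb hsupp, Fintype.sum_prod_type]
  conv_rhs => rw [matrix_eq_sum_single (cellProb Pdist)]
  simp [smul_single]

lemma sum_cellProb_smul_single (hsupp : Pdist (mcBasis m₁ m₂) = 1) :
    ∑ ij : Fin m₁ × Fin m₂, cellProb Pdist ij.1 ij.2 • single ij.1 ij.2 (1 : ℝ) = cellProb Pdist :=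
  (mEPi_eq_sum_cellProb hsupp _).symm.trans (mEPi_id hsupp)

lemma mEPi_centered_mul_transpose (hsupp : Pdist (mcBasis m₁ m₂) = 1) :
    mEPi Pdist (fun M => (M - mEPi Pdist (fun M' => M')) * (M - mEPi Pdist (fun M' => M'))ᵀ) =
      rowCov (cellProb Pdist) := by
  rw [mEPi_id hsupp, mEPi_eq_sum_cellProb hsupp,
    sum_smul_sub_mul_transpose_sub _ _ _ (by rw [Fintype.sum_prod_type]; exact sum_cellProb hsupp)
      (sum_cellProb_smul_single hsupp), sum_smul_single_mul_transpose]
  rfl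

lemma mEPi_centered_transpose_mul (hsupp : Pdist (mcBasis m₁ m₂) = 1) :
    mEPi Pdist (fun M => (M - mEPi Pdist (fun M' => M'))ᵀ * (M - mEPi Pdist (fun M' => M'))) =
      rowCov (cellProb Pdist)ᵀ := by
  rw [mEPi_id hsupp, mEPi_eq_sum_cellProb hsupp,
    sum_smul_transpose_sub_mul_sub _ _ _ (by rw [Fintype.sum_prod_type]; exact sum_cellProb hsupp)
      (sum_cellProb_smul_single hsupp), sum_smul_transpose_single_mul, rowCov, transpose_transpose]
  rfl

lemma nl2sqPi_eq_sum_cellProb (hsupp : Pdist (mcBasis m₁ m₂) = 1)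
    (B : Matrix (Fin m₁) (Fin m₂) ℝ) :
    nl2sqPi Pdist B = ∑ j, ∑ k, cellProb Pdist j k * B j k ^ 2 := by
  rw [nl2sqPi, ipL2Pi, integral_eq_sum_cellProb hsupp, Fintype.sum_prod_type]
  simp only [mip_single_one, smul_eq_mul, sq]

lemma nl2sqPi_le_frob_sq (hsupp : Pdist (mcBasis m₁ m₂) = 1) (B : Matrix (Fin m₁) (Fin m₂) ℝ) :
    nl2sqPi Pdist B ≤ frob B ^ 2 := by
  rw [nl2sqPi_eq_sum_cellProb hsupp, frob, Real.sq_sqrt (by positivity)]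
  gcongr with j _ k _
  exact mul_le_of_le_one_left (sq_nonneg _) measureReal_le_one

lemma sqrt_cellProb_mem (hsupp : Pdist (mcBasis m₁ m₂) = 1) (j : Fin m₁) (k : Fin m₂) :
    √(cellProb Pdist j k) ∈ {r | ∃ B : Matrix (Fin m₁) (Fin m₂) ℝ,
      frob B = 1 ∧ B.rank ≤ 1 ∧ r = √(nl2sqPi Pdist B)} := by
  refine ⟨single j k 1, frob_single_one j k, rank_single_one_le j k, ?_⟩
  rw [nl2sqPi_eq_sum_cellProb hsupp]
  simp [single_apply, ite_and]

lemma le_cellProb_of_le_kappa1Pi (hsupp : Pdist (mcBasis m₁ m₂) = 1) {c : ℝ}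
    (hκ : √(c / (m₁ * m₂)) ≤ kappa1Pi Pdist) (j : Fin m₁) (k : Fin m₂) :
    c / (m₁ * m₂) ≤ cellProb Pdist j k := by
  have hinf : kappa1Pi Pdist ≤ √(cellProb Pdist j k) :=
    csInf_le ⟨0, by rintro r ⟨B, -, -, rfl⟩; exact Real.sqrt_nonneg _⟩ (sqrt_cellProb_mem hsupp j k)
  exact (Real.sqrt_le_sqrt_iff measureReal_nonneg).mp (hκ.trans hinf)

lemma cellProb_le_of_kappa1'Pi_le (hsupp : Pdist (mcBasis m₁ m₂) = 1) {c' : ℝ} (hc' : 0 ≤ c')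
    (hκ : kappa1'Pi Pdist ≤ √(c' / (m₁ * m₂))) (j : Fin m₁) (k : Fin m₂) :
    cellProb Pdist j k ≤ c' / (m₁ * m₂) := by
  have hbdd : BddAbove {r | ∃ B : Matrix (Fin m₁) (Fin m₂) ℝ,
      frob B = 1 ∧ B.rank ≤ 1 ∧ r = √(nl2sqPi Pdist B)} := by
    refine ⟨1, ?_⟩
    rintro r ⟨B, hB, -, rfl⟩
    simpa [hB] using Real.sqrt_le_sqrt (nl2sqPi_le_frob_sq hsupp B)
  have hsup : √(cellProb Pdist j k) ≤ kappa1'Pi Pdist := le_csSup hbdd (sqrt_cellProb_mem hsupp j k)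
  exact (Real.sqrt_le_sqrt_iff (by positivity)).mp (hsup.trans hκ)

end CellProbabilities

theorem centered_moment_bounds_general {m₁ m₂ : ℕ} (hm₁ : 0 < m₁) (hm₂ : 0 < m₂)
    (Pdist : Measure (Matrix (Fin m₁) (Fin m₂) ℝ)) [IsProbabilityMeasure Pdist]
    (hsupp : Pdist (mcBasis m₁ m₂) = 1)
    (c₁ c₁' : ℝ) (hc₁ : 0 < c₁) (hc₁₁' : c₁ ≤ c₁')
    (hκlow : Real.sqrt (c₁ / (m₁ * m₂)) ≤ kappa1Pi Pdist)
    (hκup : kappa1'Pi Pdist ≤ Real.sqrt (c₁' / (m₁ * m₂)))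
    (htech : 2 * c₁' ≤ (max m₁ m₂ : ℕ) * c₁) :
    c₁ / (2 * (min m₁ m₂ : ℕ)) ≤
        max (spec (mEPi Pdist (fun M =>
              (M - mEPi Pdist (fun M' => M')) * (M - mEPi Pdist (fun M' => M'))ᵀ)))
            (spec (mEPi Pdist (fun M =>
              (M - mEPi Pdist (fun M' => M'))ᵀ * (M - mEPi Pdist (fun M' => M'))))) ∧
      max (spec (mEPi Pdist (fun M =>
              (M - mEPi Pdist (fun M' => M')) * (M - mEPi Pdist (fun M' => M'))ᵀ)))
          (spec (mEPi Pdist (fun M =>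
              (M - mEPi Pdist (fun M' => M'))ᵀ * (M - mEPi Pdist (fun M' => M'))))) ≤
        2 * c₁' / (min m₁ m₂ : ℕ) := by
  have hc₁' : 0 ≤ c₁' := hc₁.le.trans hc₁₁'
  set p := cellProb Pdist
  have hp0 : ∀ j k, 0 ≤ p j k := fun _ _ => measureReal_nonneg
  have hp1 : ∑ j, ∑ k, p j k = 1 := sum_cellProb hsupp
  have hlo : ∀ j k, c₁ / (m₁ * m₂) ≤ p j k := le_cellProb_of_le_kappa1Pi hsupp hκlow
  have hhi : ∀ j k, p j k ≤ c₁' / (m₁ * m₂) := cellProb_le_of_kappa1'Pi_le hsupp hc₁' hκup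
  have hpT1 : ∑ k, ∑ j, pᵀ k j = 1 := Finset.sum_comm.trans hp1
  have hloT : ∀ k j, c₁ / (m₂ * m₁) ≤ pᵀ k j := fun k j => mul_comm (m₁ : ℝ) m₂ ▸ hlo j k
  have hhiT : ∀ k j, pᵀ k j ≤ c₁' / (m₂ * m₁) := fun k j => mul_comm (m₁ : ℝ) m₂ ▸ hhi j k
  rw [mEPi_centered_mul_transpose hsupp, mEPi_centered_transpose_mul hsupp, spec_eq_l2_opNorm,
    spec_eq_l2_opNorm]
  constructor
  · rcases le_total m₁ m₂ with h | h
    · rw [max_eq_right h] at htech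
      rw [min_eq_left h]
      exact le_max_of_le_left (div_two_mul_le_norm_rowCov hm₁ hm₂ htech hp0 hp1 hlo hhi)
    · rw [max_eq_left h] at htech
      rw [min_eq_right h]
      exact le_max_of_le_right
        (div_two_mul_le_norm_rowCov hm₂ hm₁ htech (fun k j => hp0 j k) hpT1 hloT hhiT)
  · refine max_le (norm_rowCov_le_two_mul_div_min hm₁ hm₂ hc₁' hp0 hp1 hhi) ?_
    rw [min_comm]
    exact norm_rowCov_le_two_mul_div_min hm₂ hm₁ hc₁' (fun k j => hp0 j k) hpT1 hhiT

/-- Equation (5.4): bounds on the second-moment parameter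
`σ_{X̃}²` of the centered matrix `X̃ = X - E(X)` under Assumption 3 and the technical
condition `2c₁' ≤ (m₁ ∨ m₂) c₁`. -/
theorem centered_moment_bounds {m₁ m₂ : ℕ} (hm₁ : 0 < m₁) (hm₂ : 0 < m₂)
    (Pdist : Measure (Matrix (Fin m₁) (Fin m₂) ℝ)) [IsProbabilityMeasure Pdist]
    (hsupp : Pdist (mcBasis m₁ m₂) = 1)
    (c₁ c₁' : ℝ) (hc₁ : 0 < c₁) (hc₁₁' : c₁ ≤ c₁')
    (hκlow : Real.sqrt (c₁ / (m₁ * m₂)) ≤ kappa1Pi Pdist)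
    (hκmid : kappa1Pi Pdist ≤ kappa1'Pi Pdist)
    (hκup : kappa1'Pi Pdist ≤ Real.sqrt (c₁' / (m₁ * m₂)))
    (htech : 2 * c₁' ≤ (max m₁ m₂ : ℕ) * c₁) :
    c₁ / (2 * (min m₁ m₂ : ℕ)) ≤
        max (spec (mEPi Pdist (fun M =>
              (M - mEPi Pdist (fun M' => M')) * (M - mEPi Pdist (fun M' => M'))ᵀ)))
            (spec (mEPi Pdist (fun M =>
              (M - mEPi Pdist (fun M' => M'))ᵀ * (M - mEPi Pdist (fun M' => M'))))) ∧
      max (spec (mEPi Pdist (fun M =>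
              (M - mEPi Pdist (fun M' => M')) * (M - mEPi Pdist (fun M' => M'))ᵀ)))
          (spec (mEPi Pdist (fun M =>
              (M - mEPi Pdist (fun M' => M'))ᵀ * (M - mEPi Pdist (fun M' => M'))))) ≤
        2 * c₁' / (min m₁ m₂ : ℕ) :=
  centered_moment_bounds_general hm₁ hm₂ Pdist hsupp c₁ c₁' hc₁ hc₁₁' hκlow hκup htech

end MC
end
end
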